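/- arXiv:2212.00275 — 4 statements merged into one kernel-verified Lean document; each statement's English description precedes it below -/
import Mathlib

section
/- Let G be an order-preserving concave self-map on the set of strictly positive vectors in ℝ^n. Suppose (i) for every strictly positive x there exists strictly positive p with p ≤ x and Gp ≫ p, and (ii) for every strictly positive x there exists strictly positive q with x ≤ q and Gq ≤ q. Then G has a unique fixed point x̄ in the strictly positive cone, and for every strictly positive x, G^k x → x̄ as k → ∞. -/
/-!
Take `p ≤ q` in the positive cone with `p ≪ G p` and `G q ≤ q`. The iterates `aₖ = Gᵏ p` increase,
`bₖ = Gᵏ q` decrease, and `aₖ ≤ bₖ`. Choose `σ ∈ (0, 1]` with `σ (q - p) ≤ G p - p`; concavity of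
`G` along the segment from `bₖ` to `p` then gives `bₖ - aₖ ≤ (1 - σ)ᵏ (q - p)`. Hence `aₖ` and
`bₖ` converge to a common limit, which is a fixed point, and every orbit starting in `[p, q]` is
squeezed onto it. Hypotheses (i) and (ii) put any positive point and the fixed point in a common
such interval, which gives global convergence and hence uniqueness.
-/

open Filter Set Topology Function

local infix:50 " ≺ " => StrongLT

section Iterate

variable {α : Type*} [Preorder α] {f : α → α} {s : Set α} {x p q : α}

theorem MonotoneOn.iterate (hf : MonotoneOn f s) (hmap : MapsTo f s s) (k : ℕ) :
    MonotoneOn f^[k] s := by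
  induction k with
  | zero => exact monotoneOn_id
  | succ k ih =>
    rw [iterate_succ']
    exact hf.comp ih (hmap.iterate k)

theorem MonotoneOn.monotone_iterate_of_le_map (hf : MonotoneOn f s) (hmap : MapsTo f s s)
    (hx : x ∈ s) (hfx : x ≤ f x) : Monotone fun k => f^[k] x :=
  monotone_nat_of_le_succ fun k => by
    rw [iterate_succ_apply]
    exact hf.iterate hmap k hx (hmap hx) hfx

theorem MonotoneOn.antitone_iterate_of_map_le (hf : MonotoneOn f s) (hmap : MapsTo f s s)
    (hx : x ∈ s) (hfx : f x ≤ x) : Antitone fun k => f^[k] x :=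
  antitone_nat_of_succ_le fun k => by
    rw [iterate_succ_apply]
    exact hf.iterate hmap k (hmap hx) hx hfx

theorem MonotoneOn.mapsTo_iterate_Icc [s.OrdConnected] (hf : MonotoneOn f s)
    (hmap : MapsTo f s s) (hp : p ∈ s) (hq : q ∈ s) (k : ℕ) :
    MapsTo f^[k] (Icc p q) (Icc (f^[k] p) (f^[k] q)) := fun _ hx =>
  have hxs := Set.OrdConnected.out ‹_› hp hq hx
  ⟨hf.iterate hmap k hp hxs hx.1, hf.iterate hmap k hxs hq hx.2⟩

end Iterate

theorem tendsto_pi_of_tendsto_of_tendsto_of_le_of_le {β ι : Type*} {π : ι → Type*}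
    [∀ i, TopologicalSpace (π i)] [∀ i, Preorder (π i)] [∀ i, OrderTopology (π i)]
    {l : Filter β} {f g h : β → ∀ i, π i} {a : ∀ i, π i}
    (hf : Tendsto f l (𝓝 a)) (hh : Tendsto h l (𝓝 a)) (hfg : f ≤ g) (hgh : g ≤ h) :
    Tendsto g l (𝓝 a) :=
  tendsto_pi_nhds.2 fun i => tendsto_of_tendsto_of_tendsto_of_le_of_le
    (tendsto_pi_nhds.1 hf i) (tendsto_pi_nhds.1 hh i) (fun b => hfg b i) (fun b => hgh b i)

section ConcaveIteration

variable {ι : Type*} {G : (ι → ℝ) → ι → ℝ} {s : Set (ι → ℝ)} {p q x y : ι → ℝ}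

theorem tendsto_of_mem_Icc_of_tendsto_sub {β : Type*} {l : Filter β} {a b z : β → ι → ℝ}
    (hab : Tendsto (fun k => b k - a k) l (𝓝 0)) (hz : ∀ k, z k ∈ Icc (a k) (b k))
    (hy : ∀ k, y ∈ Icc (a k) (b k)) : Tendsto z l (𝓝 y) := by
  rw [← tendsto_sub_nhds_zero_iff]
  refine tendsto_pi_of_tendsto_of_tendsto_of_le_of_le (by simpa using hab.neg) hab
    (fun k => ?_) (fun k => sub_le_sub (hz k).2 (hy k).1)
  simpa only [Pi.neg_apply, neg_sub] using sub_le_sub (hz k).1 (hy k).2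

theorem exists_smul_le_of_zero_strongLT [Finite ι] {u : ι → ℝ} (hu : 0 ≺ u) (v : ι → ℝ) :
    ∃ σ ∈ Ioc (0 : ℝ) 1, σ • v ≤ u := by
  have hsmall : ∀ i, ∀ᶠ σ in 𝓝 (0 : ℝ), σ * v i < u i := fun i =>
    ((continuous_id.mul continuous_const).tendsto' 0 0 (zero_mul _)).eventually_lt_const (hu i)
  obtain ⟨σ, hσ, hσv⟩ :=
    ((eventually_mem_set.2 (Ioc_mem_nhdsGT one_pos)).and
      (nhdsWithin_le_nhds (eventually_all.2 hsmall))).exists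
  exact ⟨σ, hσ, fun i => (hσv i).le⟩

theorem iterate_sub_iterate_le_pow_smul (hmap : MapsTo G s s) (hmono : MonotoneOn G s)
    (hconc : ConcaveOn ℝ s G) (hp : p ∈ s) (hq : q ∈ s) (hGq : G q ≤ q) {σ : ℝ}
    (hσ : σ ∈ Icc (0 : ℝ) 1) (hσp : σ • (q - p) ≤ G p - p) (k : ℕ) :
    G^[k] q - G^[k] p ≤ (1 - σ) ^ k • (q - p) := by
  have hbq : ∀ k, G^[k] q ≤ q := fun k => hmono.antitone_iterate_of_map_le hmap hq hGq k.zero_le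
  have he : ∀ k, (1 - σ) ^ k ∈ Icc (0 : ℝ) 1 := fun k =>
    ⟨pow_nonneg (by linarith [hσ.2]) k, pow_le_one₀ (by linarith [hσ.2]) (by linarith [hσ.1])⟩
  suffices H : ∀ k, (1 - (1 - σ) ^ k) • G^[k] q + (1 - σ) ^ k • p ≤ G^[k] p by
    calc G^[k] q - G^[k] p
        ≤ G^[k] q - ((1 - (1 - σ) ^ k) • G^[k] q + (1 - σ) ^ k • p) := sub_le_sub_left (H k) _
      _ = (1 - σ) ^ k • (G^[k] q - p) := by module
      _ ≤ (1 - σ) ^ k • (q - p) :=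
        smul_le_smul_of_nonneg_left (sub_le_sub_right (hbq k) p) (he k).1
  intro j
  induction j with
  | zero => simp
  | succ j ih =>
    set e := (1 - σ) ^ j
    set b := G^[j] q
    have hGbq : G b ≤ q := by simpa only [b, iterate_succ_apply'] using hbq (j + 1)
    have hGp : σ • G b + (1 - σ) • p ≤ G p :=
      calc σ • G b + (1 - σ) • p = p + σ • (G b - p) := by module
        _ ≤ p + σ • (q - p) := add_le_add_right (smul_le_smul_of_nonneg_left
            (sub_le_sub_right hGbq p) hσ.1) p
        _ ≤ G p := by simpa using add_le_add_right hσp p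
    have hc : (1 - e) • b + e • p ∈ s :=
      hconc.1 (hmap.iterate j hq) hp (sub_nonneg.2 (he j).2) (he j).1 (by ring)
    rw [iterate_succ_apply', iterate_succ_apply', pow_succ]
    calc (1 - e * (1 - σ)) • G b + (e * (1 - σ)) • p
        = (1 - e) • G b + e • (σ • G b + (1 - σ) • p) := by module
      _ ≤ (1 - e) • G b + e • G p :=
        add_le_add_right (smul_le_smul_of_nonneg_left hGp (he j).1) _
      _ ≤ G ((1 - e) • b + e • p) :=
        hconc.2 (hmap.iterate j hq) hp (sub_nonneg.2 (he j).2) (he j).1 (by ring)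
      _ ≤ G (G^[j] p) := hmono hc (hmap.iterate j hp) ih

theorem tendsto_iterate_sub_iterate [Finite ι] (hmap : MapsTo G s s) (hmono : MonotoneOn G s)
    (hconc : ConcaveOn ℝ s G) (hp : p ∈ s) (hq : q ∈ s) (hpq : p ≤ q) (hGp : p ≺ G p)
    (hGq : G q ≤ q) : Tendsto (fun k => G^[k] q - G^[k] p) atTop (𝓝 0) := by
  obtain ⟨σ, ⟨hσ0, hσ1⟩, hσp⟩ :=
    exists_smul_le_of_zero_strongLT (u := G p - p) (fun i => sub_pos.2 (hGp i)) (q - p)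
  have hrate : Tendsto (fun k => (1 - σ) ^ k • (q - p)) atTop (𝓝 0) := by
    simpa using (tendsto_pow_atTop_nhds_zero_of_lt_one (r := 1 - σ) (by linarith)
      (by linarith)).smul_const (q - p)
  exact tendsto_pi_of_tendsto_of_tendsto_of_le_of_le tendsto_const_nhds hrate
    (fun k => sub_nonneg.2 (hmono.iterate hmap k hp hq hpq))
    (iterate_sub_iterate_le_pow_smul hmap hmono hconc hp hq hGq ⟨hσ0.le, hσ1⟩ hσp)

theorem exists_isFixedPt_mem_Icc [Finite ι] [s.OrdConnected] (hmap : MapsTo G s s)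
    (hmono : MonotoneOn G s) (hconc : ConcaveOn ℝ s G) (hp : p ∈ s) (hq : q ∈ s) (hpq : p ≤ q)
    (hGp : p ≺ G p) (hGq : G q ≤ q) : ∃ y ∈ Icc p q, IsFixedPt G y := by
  set a : ℕ → ι → ℝ := fun k => G^[k] p
  set b : ℕ → ι → ℝ := fun k => G^[k] q
  have ha : Monotone a := hmono.monotone_iterate_of_le_map hmap hp fun i => (hGp i).le
  have hb : Antitone b := hmono.antitone_iterate_of_map_le hmap hq hGq
  have hab : ∀ k, a k ≤ b k := fun k => hmono.iterate hmap k hp hq hpq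
  have hlim : Tendsto a atTop (𝓝 (⨆ k, a k)) :=
    tendsto_atTop_ciSup ha ⟨q, forall_mem_range.2 fun k => (hab k).trans (hb k.zero_le)⟩
  set y := ⨆ k, a k
  have hy : ∀ k, y ∈ Icc (a k) (b k) := fun k =>
    ⟨ha.ge_of_tendsto hlim k,
      le_of_tendsto hlim (eventually_atTop.2 ⟨k, fun m hm => (hab m).trans (hb hm)⟩)⟩
  have hys : y ∈ s := Set.OrdConnected.out ‹_› hp hq (hy 0)
  have hGy : ∀ k, G y ∈ Icc (a (k + 1)) (b (k + 1)) := fun k => by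
    simp only [a, b, iterate_succ_apply']
    exact ⟨hmono (hmap.iterate k hp) hys (hy k).1, hmono hys (hmap.iterate k hq) (hy k).2⟩
  have hsub := (tendsto_iterate_sub_iterate hmap hmono hconc hp hq hpq hGp hGq).comp
    (tendsto_add_atTop_nat 1)
  exact ⟨y, hy 0, tendsto_const_nhds_iff.1 <|
    tendsto_of_mem_Icc_of_tendsto_sub (a := fun k => a (k + 1)) (b := fun k => b (k + 1))
      hsub hGy fun k => hy (k + 1)⟩

theorem tendsto_iterate_of_isFixedPt [Finite ι] [s.OrdConnected] (hmap : MapsTo G s s)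
    (hmono : MonotoneOn G s) (hconc : ConcaveOn ℝ s G) (hp : p ∈ s) (hq : q ∈ s)
    (hGp : p ≺ G p) (hGq : G q ≤ q) (hx : x ∈ Icc p q) (hy : y ∈ Icc p q) (hfix : IsFixedPt G y) :
    Tendsto (fun k => G^[k] x) atTop (𝓝 y) :=
  tendsto_of_mem_Icc_of_tendsto_sub
    (tendsto_iterate_sub_iterate hmap hmono hconc hp hq (hx.1.trans hx.2) hGp hGq)
    (fun k => hmono.mapsTo_iterate_Icc hmap hp hq k hx)
    fun k => (hfix.iterate k).eq ▸ hmono.mapsTo_iterate_Icc hmap hp hq k hy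

end ConcaveIteration

theorem stmt_5 {n : ℕ} (G : (Fin n → ℝ) → (Fin n → ℝ))
    (hself : ∀ x, (∀ i, 0 < x i) → ∀ i, 0 < G x i)
    (hmono : ∀ x y, (∀ i, 0 < x i) → (∀ i, 0 < y i) → x ≤ y → G x ≤ G y)
    (hconc : ∀ x y, (∀ i, 0 < x i) → (∀ i, 0 < y i) →
      ∀ lam : ℝ, lam ∈ Set.Icc (0 : ℝ) 1 →
        lam • G x + (1 - lam) • G y ≤ G (lam • x + (1 - lam) • y))
    (h1 : ∀ x, (∀ i, 0 < x i) → ∃ p, (∀ i, 0 < p i) ∧ p ≤ x ∧ (∀ i, p i < G p i))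
    (h2 : ∀ x, (∀ i, 0 < x i) → ∃ q, (∀ i, 0 < q i) ∧ x ≤ q ∧ G q ≤ q) :
    ∃ xbar : Fin n → ℝ, (∀ i, 0 < xbar i) ∧ G xbar = xbar ∧
      (∀ x, (∀ i, 0 < x i) → G x = x → x = xbar) ∧
      (∀ x, (∀ i, 0 < x i) →
        Filter.Tendsto (fun k => G^[k] x) Filter.atTop (nhds xbar)) := by
  set S : Set (Fin n → ℝ) := {x | 0 ≺ x}
  have hmap : MapsTo G S S := hself
  have hmono' : MonotoneOn G S := fun x hx y hy => hmono x y hx hy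
  have hconc' : ConcaveOn ℝ S G := by
    refine ⟨fun x hx y hy a b ha hb hab i => convex_Ioi (0 : ℝ) (hx i) (hy i) ha hb hab,
      fun x hx y hy a b ha hb hab => ?_⟩
    obtain rfl : b = 1 - a := by linarith
    exact hconc x y hx hy a ⟨ha, by linarith⟩
  have : S.OrdConnected := IsUpperSet.ordConnected fun x y hxy hx i => (hx i).trans_le (hxy i)
  obtain ⟨p, hp, -, hGp⟩ := h1 (fun _ => 1) fun _ => one_pos
  obtain ⟨q, hq, hpq, hGq⟩ := h2 p hp
  obtain ⟨xbar, hxbar, hfix⟩ := exists_isFixedPt_mem_Icc hmap hmono' hconc' hp hq hpq hGp hGq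
  have hxbar_pos : 0 ≺ xbar := fun i => (hp i).trans_le (hxbar.1 i)
  have hconv : ∀ x, 0 ≺ x → Tendsto (fun k => G^[k] x) atTop (𝓝 xbar) := fun x hx => by
    obtain ⟨p', hp', hp'x, hGp'⟩ := h1 (x ⊓ xbar) fun i => lt_min (hx i) (hxbar_pos i)
    obtain ⟨q', hq', hxq', hGq'⟩ := h2 (x ⊔ xbar) fun i => (hx i).trans_le le_sup_left
    exact tendsto_iterate_of_isFixedPt hmap hmono' hconc' hp' hq' hGp' hGq'
      ⟨hp'x.trans inf_le_left, le_sup_left.trans hxq'⟩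
      ⟨hp'x.trans inf_le_right, le_sup_right.trans hxq'⟩ hfix
  refine ⟨xbar, hxbar_pos, hfix, fun x hx hGx => ?_, hconv⟩
  have hconst : (fun k => G^[k] x) = fun _ => x := funext (iterate_fixed hGx)
  exact tendsto_const_nhds_iff.1 (hconst ▸ hconv x hx)
end

section
/- Let A be an n×n nonnegative irreducible matrix, b ∈ ℝ^n with all components strictly positive, and s a nonzero real number. Define G on strictly positive vectors y of ℝ^n by Gy = ((Ay)^{1/s} + b)^s, where powers are taken componentwise. If G has a fixed point with all components strictly positive, then r(A)^s < 1, where r(A) is the spectral radius of A. -/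
noncomputable def specRad {n : ℕ} (A : Matrix (Fin n) (Fin n) ℝ) : ℝ :=
  sSup {r : ℝ | ∃ μ ∈ spectrum ℂ (A.map (fun a => (a : ℂ))), r = ‖μ‖}

def MatIrreducible {n : ℕ} (A : Matrix (Fin n) (Fin n) ℝ) : Prop :=
  ∀ i j, ∃ k : ℕ, 0 < k ∧ 0 < (A ^ k) i j

/-!
At a positive fixed point `y` we have `y ^ (1/s) = (A y) ^ (1/s) + b > (A y) ^ (1/s)`
componentwise. For `s > 0` this says `A y < y`; for `s < 0` it says `A y > y`, where
irreducibility is needed to make `A y` positive. By the strict Collatz–Wielandt bounds the first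
gives `r(A) < 1` and the second `r(A) > 1`, so `r(A) ^ s < 1` in both cases. The upper bound comes
from testing an eigenvector against `y`; the lower bound from `c ^ k • y ≤ A ^ k y` and Gelfand's
formula.
-/

open Filter Finset Matrix

namespace spectrum

variable {A : Type*} [NormedRing A] [NormedAlgebra ℂ A] [CompleteSpace A] [Nontrivial A]

theorem exists_le_norm_of_pow_le_norm_pow {a : A} {c : ℝ} (hc : 0 ≤ c)
    (h : ∀ k : ℕ, c ^ k ≤ ‖a ^ k‖) : ∃ μ ∈ spectrum ℂ a, c ≤ ‖μ‖ := by
  have hle : ENNReal.ofReal c ≤ spectralRadius ℂ a := by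
    refine ge_of_tendsto (pow_norm_pow_one_div_tendsto_nhds_spectralRadius a) ?_
    filter_upwards [eventually_ne_atTop 0] with k hk
    calc ENNReal.ofReal c = ENNReal.ofReal ((c ^ k) ^ (1 / (k : ℝ))) := by
          rw [one_div, Real.pow_rpow_inv_natCast hc hk]
      _ ≤ ENNReal.ofReal (‖a ^ k‖ ^ (1 / (k : ℝ))) := by gcongr; exact h k
  obtain ⟨μ, hμ, hμa⟩ := exists_nnnorm_eq_spectralRadius a
  refine ⟨μ, hμ, ?_⟩
  rw [← hμa, ← enorm_eq_nnnorm, ← ofReal_norm] at hle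
  exact (ENNReal.ofReal_le_ofReal_iff (norm_nonneg μ)).mp hle

end spectrum

namespace Matrix

variable {ι : Type*} [Fintype ι]

theorem exists_mulVec_eq_smul_of_mem_spectrum [DecidableEq ι] {M : Matrix ι ι ℂ} {μ : ℂ}
    (h : μ ∈ spectrum ℂ M) : ∃ v : ι → ℂ, v ≠ 0 ∧ M *ᵥ v = μ • v := by
  rw [← AlgEquiv.spectrum_eq (toLinAlgEquiv' : Matrix ι ι ℂ ≃ₐ[ℂ] _),
    ← Module.End.hasEigenvalue_iff_mem_spectrum] at h
  obtain ⟨v, hv⟩ := h.exists_hasEigenvector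
  exact ⟨v, hv.2, by simpa [toLinAlgEquiv'_apply, toLin'_apply] using hv.apply_eq_smul⟩

variable {A : Matrix ι ι ℝ}

theorem mulVec_mono_of_nonneg (hA : ∀ i j, 0 ≤ A i j) {x z : ι → ℝ} (h : x ≤ z) :
    A *ᵥ x ≤ A *ᵥ z :=
  fun i => sum_le_sum fun j _ => mul_le_mul_of_nonneg_left (h j) (hA i j)

theorem mulVec_nonneg_of_nonneg (hA : ∀ i j, 0 ≤ A i j) {x : ι → ℝ} (hx : 0 ≤ x) :
    0 ≤ A *ᵥ x := by
  simpa using mulVec_mono_of_nonneg hA hx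

theorem norm_ofReal_mulVec_le (hA : ∀ i j, 0 ≤ A i j) (v : ι → ℂ) (i : ι) :
    ‖(A.map (fun a => (a : ℂ)) *ᵥ v) i‖ ≤ (A *ᵥ fun j => ‖v j‖) i := by
  refine (norm_sum_le _ _).trans_eq (sum_congr rfl fun j _ => ?_)
  change ‖(A i j : ℂ) * v j‖ = A i j * ‖v j‖
  rw [norm_mul, Complex.norm_real, Real.norm_of_nonneg (hA i j)]

theorem norm_le_of_mulVec_le_smul [DecidableEq ι] (hA : ∀ i j, 0 ≤ A i j) {y : ι → ℝ}
    (hy : ∀ i, 0 < y i) {c : ℝ} (h : A *ᵥ y ≤ c • y) {μ : ℂ}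
    (hμ : μ ∈ spectrum ℂ (A.map (fun a => (a : ℂ)))) : ‖μ‖ ≤ c := by
  obtain ⟨v, hv0, hv⟩ := exists_mulVec_eq_smul_of_mem_spectrum hμ
  obtain ⟨j₀, hj₀⟩ := Function.ne_iff.mp hv0
  have : Nonempty ι := ⟨j₀⟩
  obtain ⟨i₀, hi₀⟩ := Finite.exists_max fun i => ‖v i‖ / y i
  set t := ‖v i₀‖ / y i₀
  have ht : 0 < t := (div_pos (norm_pos_iff.mpr hj₀) (hy j₀)).trans_le (hi₀ j₀)
  have hvt : (fun j => ‖v j‖) ≤ t • y := fun j => (div_le_iff₀ (hy j)).mp (hi₀ j)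
  have hvi₀ : ‖v i₀‖ = t * y i₀ := (div_mul_cancel₀ _ (hy i₀).ne').symm
  have key : ‖μ‖ * (t * y i₀) ≤ c * (t * y i₀) :=
    calc ‖μ‖ * (t * y i₀) = ‖(A.map (fun a => (a : ℂ)) *ᵥ v) i₀‖ := by
          rw [hv, Pi.smul_apply, smul_eq_mul, norm_mul, hvi₀]
      _ ≤ (A *ᵥ (t • y)) i₀ :=
          (norm_ofReal_mulVec_le hA v i₀).trans (mulVec_mono_of_nonneg hA hvt i₀)
      _ = t * (A *ᵥ y) i₀ := by rw [mulVec_smul, Pi.smul_apply, smul_eq_mul]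
      _ ≤ t * (c * y i₀) := by gcongr; exact h i₀
      _ = c * (t * y i₀) := by ring
  exact le_of_mul_le_mul_right key (mul_pos ht (hy i₀))

theorem smul_le_mulVec_pow [DecidableEq ι] (hA : ∀ i j, 0 ≤ A i j) {y : ι → ℝ} {c : ℝ} (hc : 0 ≤ c)
    (h : c • y ≤ A *ᵥ y) (k : ℕ) : c ^ k • y ≤ (A ^ k) *ᵥ y := by
  induction k with
  | zero => simp
  | succ k ih =>
    calc c ^ (k + 1) • y = c ^ k • (c • y) := by rw [pow_succ, mul_smul]
      _ ≤ c ^ k • (A *ᵥ y) := smul_le_smul_of_nonneg_left h (pow_nonneg hc k)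
      _ = A *ᵥ (c ^ k • y) := (mulVec_smul A _ y).symm
      _ ≤ A *ᵥ ((A ^ k) *ᵥ y) := mulVec_mono_of_nonneg hA ih
      _ = (A ^ (k + 1)) *ᵥ y := by rw [mulVec_mulVec, pow_succ']

section LinftyOpNorm

attribute [local instance] Matrix.linftyOpNormedAddCommGroup Matrix.linftyOpNormedRing
  Matrix.linftyOpNormedAlgebra

theorem pow_le_linfty_opNorm_pow [DecidableEq ι] [Nonempty ι] (hA : ∀ i j, 0 ≤ A i j)
    {y : ι → ℝ} (hy : ∀ i, 0 < y i) {c : ℝ} (hc : 0 ≤ c) (h : c • y ≤ A *ᵥ y) (k : ℕ) :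
    c ^ k ≤ ‖A ^ k‖ := by
  have hy₀ : 0 < ‖y‖ := norm_pos_iff.mpr fun h0 => (hy (Classical.arbitrary ι)).ne' (congrFun h0 _)
  have hle : ‖c ^ k • y‖ ≤ ‖(A ^ k) *ᵥ y‖ := by
    refine (pi_norm_le_iff_of_nonneg (norm_nonneg _)).mpr fun i => ?_
    rw [Real.norm_of_nonneg (show 0 ≤ (c ^ k • y) i from smul_nonneg (pow_nonneg hc k) (hy i).le)]
    exact (smul_le_mulVec_pow hA hc h k i).trans ((Real.le_norm_self _).trans (norm_le_pi_norm _ i))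
  rw [norm_smul, Real.norm_of_nonneg (pow_nonneg hc k)] at hle
  exact le_of_mul_le_mul_right (hle.trans (linfty_opNorm_mulVec _ _)) hy₀

theorem exists_le_norm_of_smul_le_mulVec [DecidableEq ι] [Nonempty ι] (hA : ∀ i j, 0 ≤ A i j)
    {y : ι → ℝ} (hy : ∀ i, 0 < y i) {c : ℝ} (hc : 0 ≤ c) (h : c • y ≤ A *ᵥ y) :
    ∃ μ ∈ spectrum ℂ (A.map (fun a => (a : ℂ))), c ≤ ‖μ‖ := by
  refine spectrum.exists_le_norm_of_pow_le_norm_pow (a := A.map (fun a => (a : ℂ))) hc fun k => ?_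
  rw [show A.map (fun a => (a : ℂ)) ^ k = (A ^ k).map (fun a => (a : ℂ)) from
    (map_pow Complex.ofRealHom.mapMatrix A k).symm]
  simpa [linfty_opNorm_def] using pow_le_linfty_opNorm_pow hA hy hc h k

end LinftyOpNorm

end Matrix

section SpecRad

variable {n : ℕ} {A : Matrix (Fin n) (Fin n) ℝ}

theorem specRad_nonneg (A : Matrix (Fin n) (Fin n) ℝ) : 0 ≤ specRad A :=
  Real.sSup_nonneg fun _ ⟨μ, _, hr⟩ => hr ▸ norm_nonneg μ

theorem specRad_of_isEmpty [IsEmpty (Fin n)] (A : Matrix (Fin n) (Fin n) ℝ) : specRad A = 0 := by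
  simp [specRad, spectrum.of_subsingleton]

theorem norm_le_specRad {μ : ℂ} (hμ : μ ∈ spectrum ℂ (A.map (fun a => (a : ℂ)))) :
    ‖μ‖ ≤ specRad A := by
  refine le_csSup (((finite_spectrum (A.map (fun a => (a : ℂ)))).image (‖·‖)).bddAbove.mono ?_)
    ⟨μ, hμ, rfl⟩
  rintro _ ⟨ν, hν, rfl⟩
  exact ⟨ν, hν, rfl⟩

theorem specRad_lt_of_mulVec_lt [Nonempty (Fin n)] (hA : ∀ i j, 0 ≤ A i j) {y : Fin n → ℝ}
    (hy : ∀ i, 0 < y i) {r : ℝ} (h : ∀ i, (A *ᵥ y) i < r * y i) : specRad A < r := by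
  obtain ⟨i₀, hi₀⟩ := Finite.exists_max fun i => (A *ᵥ y) i / y i
  set c := (A *ᵥ y) i₀ / y i₀
  have hcr : c < r := (div_lt_iff₀ (hy i₀)).mpr (h i₀)
  have hAy : A *ᵥ y ≤ c • y := fun i => (div_le_iff₀ (hy i)).mp (hi₀ i)
  have hc : 0 ≤ c := div_nonneg (mulVec_nonneg_of_nonneg hA (fun i => (hy i).le) i₀) (hy i₀).le
  refine (Real.sSup_le ?_ hc).trans_lt hcr
  rintro _ ⟨μ, hμ, rfl⟩
  exact norm_le_of_mulVec_le_smul hA hy hAy hμ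

theorem lt_specRad_of_lt_mulVec [Nonempty (Fin n)] (hA : ∀ i j, 0 ≤ A i j) {y : Fin n → ℝ}
    (hy : ∀ i, 0 < y i) {r : ℝ} (hr : 0 ≤ r) (h : ∀ i, r * y i < (A *ᵥ y) i) : r < specRad A := by
  obtain ⟨i₀, hi₀⟩ := Finite.exists_min fun i => (A *ᵥ y) i / y i
  set c := (A *ᵥ y) i₀ / y i₀
  have hrc : r < c := (lt_div_iff₀ (hy i₀)).mpr (h i₀)
  have hAy : c • y ≤ A *ᵥ y := fun i => (le_div_iff₀ (hy i)).mp (hi₀ i)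
  obtain ⟨μ, hμ, hcμ⟩ := exists_le_norm_of_smul_le_mulVec hA hy (hr.trans hrc.le) hAy
  exact hrc.trans_le (hcμ.trans (norm_le_specRad hμ))

theorem MatIrreducible.exists_pos_of_nonneg (hA : ∀ i j, 0 ≤ A i j) (hirr : MatIrreducible A)
    (i : Fin n) : ∃ j, 0 < A i j := by
  by_contra! hrow
  obtain ⟨k, hk, hpos⟩ := hirr i i
  obtain ⟨m, rfl⟩ := Nat.exists_eq_add_one_of_ne_zero hk.ne'
  rw [pow_succ', mul_apply, sum_eq_zero fun l _ => by rw [le_antisymm (hrow l) (hA i l), zero_mul]]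
    at hpos
  exact hpos.false

theorem MatIrreducible.mulVec_pos (hA : ∀ i j, 0 ≤ A i j) (hirr : MatIrreducible A)
    {y : Fin n → ℝ} (hy : ∀ i, 0 < y i) (i : Fin n) : 0 < (A *ᵥ y) i := by
  obtain ⟨j, hj⟩ := hirr.exists_pos_of_nonneg hA i
  exact (mul_pos hj (hy j)).trans_le
    (single_le_sum (fun l _ => mul_nonneg (hA i l) (hy l).le) (mem_univ j))

end SpecRad

theorem stmt_9 {n : ℕ} (A : Matrix (Fin n) (Fin n) ℝ)
    (hA : ∀ i j, 0 ≤ A i j) (hirr : MatIrreducible A)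
    (b : Fin n → ℝ) (hb : ∀ i, 0 < b i) (s : ℝ) (hs : s ≠ 0)
    (G : (Fin n → ℝ) → (Fin n → ℝ))
    (hG : ∀ y, G y = fun i => ((∑ j, A i j * y j) ^ (1 / s) + b i) ^ s)
    (hfix : ∃ y : Fin n → ℝ, (∀ i, 0 < y i) ∧ G y = y) :
    specRad A ^ s < 1 := by
  rcases isEmpty_or_nonempty (Fin n) with _ | _
  · rw [specRad_of_isEmpty, Real.zero_rpow hs]
    exact one_pos
  obtain ⟨y, hy, hGy⟩ := hfix
  have hAy : 0 ≤ A *ᵥ y := mulVec_nonneg_of_nonneg hA fun j => (hy j).le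
  have hlt : ∀ i, (A *ᵥ y) i ^ s⁻¹ < y i ^ s⁻¹ := fun i => by
    have hyi : y i = ((A *ᵥ y) i ^ s⁻¹ + b i) ^ s := by
      have := congrFun hGy i
      rw [hG, one_div] at this
      exact this.symm
    rw [hyi, Real.rpow_rpow_inv (add_nonneg (Real.rpow_nonneg (hAy i) _) (hb i).le) hs]
    linarith [hb i]
  rcases hs.lt_or_gt with hneg | hpos
  · refine Real.rpow_lt_one_of_one_lt_of_neg (lt_specRad_of_lt_mulVec hA hy zero_le_one ?_) hneg
    intro i
    rw [one_mul, ← Real.rpow_lt_rpow_iff_of_neg (hirr.mulVec_pos hA hy i) (hy i)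
      (inv_lt_zero.mpr hneg)]
    exact hlt i
  · refine Real.rpow_lt_one (specRad_nonneg A) (specRad_lt_of_mulVec_lt hA hy ?_) hpos
    intro i
    rw [one_mul, ← Real.rpow_lt_rpow_iff (hAy i) (hy i).le (inv_pos.mpr hpos)]
    exact hlt i
end

section
/- Let A be an n×n nonnegative matrix, b ∈ ℝ^n with b ≫ 0, and s ∈ ℝ with s < 0 or s ≥ 1. Then the map G defined on strictly positive vectors by Gy = ((Ay)^{1/s} + b)^s (componentwise operations) is order-preserving and concave on the strictly positive cone. -/
/-!
With `p = 1/s`, the scalar map `f(r) = (r ^ p + c) ^ s` has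
`f'(r) = (r ^ p + c) ^ (s - 1) r ^ (p - 1) > 0` and
`f''(r) = (p - 1) c (r ^ p + c) ^ (s - 2) r ^ (p - 2) ≤ 0` on `r > 0`, because `s p = 1` and `p ≤ 1`.
Each coordinate of `G` is `f` composed with the nonnegative linear form given by a row of `A`,
which is positive on the positive cone unless the row vanishes, in which case the coordinate is
constant.
-/

open Set

section RpowAddConstRpow

variable {c s p x : ℝ}

lemma hasDerivAt_rpow_add_const_rpow (hc : 0 ≤ c) (hsp : s * p = 1) (hx : 0 < x) :
    HasDerivAt (fun r : ℝ => (r ^ p + c) ^ s) ((x ^ p + c) ^ (s - 1) * x ^ (p - 1)) x := by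
  have hu : 0 < x ^ p + c := by positivity
  refine (((hasDerivAt_id x).rpow_const (p := p) (Or.inl hx.ne')).add_const c
    |>.rpow_const (p := s) (Or.inl hu.ne')).congr_deriv ?_
  simp only [id]
  linear_combination ((x ^ p + c) ^ (s - 1) * x ^ (p - 1)) * hsp

lemma hasDerivAt_rpow_add_const_rpow_mul_rpow (hc : 0 ≤ c) (hsp : s * p = 1) (hx : 0 < x) :
    HasDerivAt (fun r : ℝ => (r ^ p + c) ^ (s - 1) * r ^ (p - 1))
      ((p - 1) * c * ((x ^ p + c) ^ (s - 2) * x ^ (p - 2))) x := by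
  have hu : 0 < x ^ p + c := by positivity
  refine ((((hasDerivAt_id x).rpow_const (p := p) (Or.inl hx.ne')).add_const c
    |>.rpow_const (p := s - 1) (Or.inl hu.ne')).mul
    ((hasDerivAt_id x).rpow_const (p := p - 1) (Or.inl hx.ne'))).congr_deriv ?_
  have hxp : x ^ (p - 1) * x ^ (p - 1) = x ^ p * x ^ (p - 2) := by
    rw [← Real.rpow_add hx, ← Real.rpow_add hx]; ring_nf
  have hup : (x ^ p + c) ^ (s - 1) = (x ^ p + c) ^ (s - 2) * (x ^ p + c) := by
    rw [← Real.rpow_add_one hu.ne']; ring_nf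
  simp only [id, hup, show s - 1 - 1 = s - 2 by ring, show p - 1 - 1 = p - 2 by ring]
  linear_combination ((s - 1) * p * (x ^ p + c) ^ (s - 2)) * hxp
    + ((x ^ p + c) ^ (s - 2) * x ^ p * x ^ (p - 2)) * hsp

lemma monotoneOn_rpow_add_const_rpow (hc : 0 ≤ c) (hsp : s * p = 1) :
    MonotoneOn (fun r : ℝ => (r ^ p + c) ^ s) (Ioi 0) := by
  refine monotoneOn_of_hasDerivWithinAt_nonneg (convex_Ioi 0)
    (fun x hx => (hasDerivAt_rpow_add_const_rpow hc hsp hx).continuousAt.continuousWithinAt)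
    (fun x hx => (hasDerivAt_rpow_add_const_rpow hc hsp (interior_subset hx)).hasDerivWithinAt)
    (fun x hx => ?_)
  have hx : 0 < x := interior_subset hx
  have : 0 < x ^ p + c := by positivity
  positivity

lemma concaveOn_rpow_add_const_rpow (hc : 0 ≤ c) (hsp : s * p = 1) (hp : p ≤ 1) :
    ConcaveOn ℝ (Ioi 0) (fun r : ℝ => (r ^ p + c) ^ s) := by
  refine concaveOn_of_hasDerivWithinAt2_nonpos (convex_Ioi 0)
    (fun x hx => (hasDerivAt_rpow_add_const_rpow hc hsp hx).continuousAt.continuousWithinAt)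
    (fun x hx => (hasDerivAt_rpow_add_const_rpow hc hsp (interior_subset hx)).hasDerivWithinAt)
    (fun x hx =>
      (hasDerivAt_rpow_add_const_rpow_mul_rpow hc hsp (interior_subset hx)).hasDerivWithinAt)
    (fun x hx => ?_)
  have hx : 0 < x := interior_subset hx
  have : 0 < x ^ p + c := by positivity
  have : 0 ≤ c * ((x ^ p + c) ^ (s - 2) * x ^ (p - 2)) := by positivity
  nlinarith

end RpowAddConstRpow

section PositiveOrthant

variable {ι : Type*} [Fintype ι] {a y : ι → ℝ} {φ : ℝ → ℝ}

lemma sum_mul_pos (ha : ∀ j, 0 ≤ a j) (ha0 : a ≠ 0) (hy : y ∈ univ.pi fun _ => Ioi 0) :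
    0 < ∑ j, a j * y j := by
  obtain ⟨j, hj⟩ := Function.ne_iff.mp ha0
  exact Finset.sum_pos' (fun j _ => mul_nonneg (ha j) (hy j trivial).le)
    ⟨j, Finset.mem_univ _, mul_pos ((ha j).lt_of_ne' hj) (hy j trivial)⟩

lemma MonotoneOn.comp_sum_mul (hφ : MonotoneOn φ (Ioi 0)) (ha : ∀ j, 0 ≤ a j) :
    MonotoneOn (fun y => φ (∑ j, a j * y j)) (univ.pi fun _ => Ioi 0) := by
  rcases eq_or_ne a 0 with rfl | ha0
  · simpa using monotoneOn_const
  intro y hy z hz hyz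
  exact hφ (sum_mul_pos ha ha0 hy) (sum_mul_pos ha ha0 hz)
    (Finset.sum_le_sum fun j _ => mul_le_mul_of_nonneg_left (hyz j) (ha j))

lemma ConcaveOn.comp_sum_mul (hφ : ConcaveOn ℝ (Ioi 0) φ) (ha : ∀ j, 0 ≤ a j) :
    ConcaveOn ℝ (univ.pi fun _ => Ioi 0) (fun y => φ (∑ j, a j * y j)) := by
  rcases eq_or_ne a 0 with rfl | ha0
  · simpa using concaveOn_const _ (convex_pi fun _ _ => convex_Ioi 0)
  refine ⟨convex_pi fun _ _ => convex_Ioi 0, fun y hy z hz μ ν hμ hν hμν => ?_⟩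
  have hlin : ∑ j, a j * (μ • y + ν • z) j = μ * ∑ j, a j * y j + ν * ∑ j, a j * z j := by
    simp only [Pi.add_apply, Pi.smul_apply, smul_eq_mul, Finset.mul_sum, ← Finset.sum_add_distrib]
    exact Finset.sum_congr rfl fun j _ => by ring
  simp only [smul_eq_mul, hlin]
  exact hφ.2 (sum_mul_pos ha ha0 hy) (sum_mul_pos ha ha0 hz) hμ hν hμν

end PositiveOrthant

lemma one_div_le_one_of_neg_or_one_le {s : ℝ} (hs : s < 0 ∨ 1 ≤ s) : 1 / s ≤ 1 := by
  rcases hs with hs | hs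
  · exact (one_div_neg.mpr hs).le.trans zero_le_one
  · exact div_le_one_of_le₀ hs (by linarith)

theorem stmt_11 {n : ℕ} (A : Matrix (Fin n) (Fin n) ℝ)
    (hA : ∀ i j, 0 ≤ A i j)
    (b : Fin n → ℝ) (hb : ∀ i, 0 < b i) (s : ℝ) (hs : s < 0 ∨ 1 ≤ s)
    (G : (Fin n → ℝ) → (Fin n → ℝ))
    (hG : ∀ y, G y = fun i => ((∑ j, A i j * y j) ^ (1 / s) + b i) ^ s) :
    (∀ y z, (∀ i, 0 < y i) → (∀ i, 0 < z i) → y ≤ z → G y ≤ G z) ∧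
      (∀ y z, (∀ i, 0 < y i) → (∀ i, 0 < z i) →
        ∀ lam : ℝ, lam ∈ Set.Icc (0 : ℝ) 1 →
          lam • G y + (1 - lam) • G z ≤ G (lam • y + (1 - lam) • z)) := by
  have hsp : s * (1 / s) = 1 := mul_one_div_cancel (by rcases hs with hs | hs <;> linarith)
  have hp := one_div_le_one_of_neg_or_one_le hs
  have hG_i (i : Fin n) : (fun y => G y i) = fun y => ((∑ j, A i j * y j) ^ (1 / s) + b i) ^ s := by
    simp [hG]
  constructor
  · intro y z hy hz hyz i
    have hmono := (monotoneOn_rpow_add_const_rpow (hb i).le hsp).comp_sum_mul (hA i)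
    rw [← hG_i] at hmono
    exact hmono (fun j _ => hy j) (fun j _ => hz j) hyz
  · rintro y z hy hz lam ⟨hlam0, hlam1⟩ i
    have hconc := (concaveOn_rpow_add_const_rpow (hb i).le hsp hp).comp_sum_mul (hA i)
    rw [← hG_i] at hconc
    exact hconc.2 (fun j _ => hy j) (fun j _ => hz j) hlam0 (by linarith) (by ring)
end

section
/- Let Q be an n×n irreducible stochastic matrix, β ∈ (0,1), c ∈ ℝ^n strictly positive, ρ ≠ 0 and α ≠ 0. Then the Epstein–Zin equation v = ((1−β) c^ρ + β ((Qv^α)^{1/α})^ρ)^{1/ρ} (componentwise operations) has a unique strictly positive solution v in ℝ^n. -/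
open Real Finset Function Set

lemma Finite.exists_pos_forall_le {ι : Type*} [Finite ι] {a : ι → ℝ} (ha : ∀ i, 0 < a i) :
    ∃ m > 0, ∀ i, m ≤ a i := by
  cases isEmpty_or_nonempty ι
  · exact ⟨1, one_pos, isEmptyElim⟩
  · obtain ⟨i₀, hi₀⟩ := Finite.exists_min a
    exact ⟨a i₀, ha i₀, hi₀⟩

lemma log_eq_mul_log_iff_eq_rpow {x y ρ : ℝ} (hx : 0 < x) (hy : 0 < y) (hρ : ρ ≠ 0) :
    log y = ρ * log x ↔ x = y ^ (1 / ρ) := by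
  rw [rpow_def_of_pos hy, ← exp_log hx, exp_eq_exp, log_exp]
  constructor <;> intro h <;> field_simp at h ⊢ <;> linarith

lemma abs_log_add_mul_exp_sub_le {a b m L s t : ℝ} (hm : 0 < m) (hma : m ≤ a) (hb : 0 ≤ b)
    (hs : s ≤ L) (ht : t ≤ L) :
    |log (a + b * exp s) - log (a + b * exp t)| ≤ b * exp L / (m + b * exp L) * |s - t| := by
  have ha : 0 < a := hm.trans_le hma
  have hpos : ∀ x, 0 < a + b * exp x := fun x => by positivity
  have hderiv : ∀ x, HasDerivAt (fun y => log (a + b * exp y)) (b * exp x / (a + b * exp x)) x :=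
    fun x => (((hasDerivAt_exp x).const_mul b).const_add a).log (hpos x).ne'
  have hbound : ∀ x ∈ Iic L, ‖b * exp x / (a + b * exp x)‖ ≤ b * exp L / (m + b * exp L) := by
    intro x hx
    have hexp : exp x ≤ exp L := exp_le_exp.2 hx
    rw [Real.norm_of_nonneg (by positivity), div_le_div_iff₀ (hpos x) (by positivity)]
    nlinarith [mul_le_mul_of_nonneg_left hexp hb, exp_pos x, mul_nonneg hb (exp_pos x).le]
  simpa only [Real.norm_eq_abs] using (convex_Iic L).norm_image_sub_le_of_norm_hasDerivWithin_le
    (fun x _ => (hderiv x).hasDerivWithinAt) hbound ht hs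

section CertaintyEquiv

variable {ι : Type*} [Fintype ι] {Q : Matrix ι ι ℝ} {θ : ℝ}

lemma sum_mul_exp_pos (hQ : ∀ i j, 0 ≤ Q i j) (hQ1 : ∀ i, ∑ j, Q i j = 1) (f : ι → ℝ) (i : ι) :
    0 < ∑ j, Q i j * exp (f j) := by
  obtain ⟨j, -, hj⟩ := exists_lt_of_sum_lt (s := univ) (f := fun _ => (0 : ℝ)) (g := Q i)
    (by simp [hQ1 i])
  exact sum_pos' (fun k _ => mul_nonneg (hQ i k) (exp_pos _).le)
    ⟨j, mem_univ j, mul_pos hj (exp_pos _)⟩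

/-- In the coordinates `u = ρ log v`, `θ = α / ρ`, this is `ρ` times the log of the certainty
equivalent `(Q v ^ α) ^ (1 / α)`. -/
noncomputable def certaintyEquiv (Q : Matrix ι ι ℝ) (θ : ℝ) (u : ι → ℝ) (i : ι) : ℝ :=
  θ⁻¹ * log (∑ j, Q i j * exp (θ * u j))

lemma certaintyEquiv_mono (hQ : ∀ i j, 0 ≤ Q i j) (hQ1 : ∀ i, ∑ j, Q i j = 1) (hθ : θ ≠ 0) :
    Monotone (certaintyEquiv Q θ) := by
  intro u v huv i
  have hlog (f g : ι → ℝ) (hfg : f ≤ g) :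
      log (∑ j, Q i j * exp (f j)) ≤ log (∑ j, Q i j * exp (g j)) :=
    log_le_log (sum_mul_exp_pos hQ hQ1 f i) <| sum_le_sum fun j _ =>
      mul_le_mul_of_nonneg_left (exp_le_exp.2 (hfg j)) (hQ i j)
  rcases hθ.lt_or_gt with hneg | hpos
  · exact mul_le_mul_of_nonpos_left (hlog _ _ fun j => mul_le_mul_of_nonpos_left (huv j) hneg.le)
      (inv_nonpos.2 hneg.le)
  · exact mul_le_mul_of_nonneg_left (hlog _ _ fun j => mul_le_mul_of_nonneg_left (huv j) hpos.le)
      (inv_nonneg.2 hpos.le)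

lemma certaintyEquiv_add_const (hQ : ∀ i j, 0 ≤ Q i j) (hQ1 : ∀ i, ∑ j, Q i j = 1) (hθ : θ ≠ 0)
    (u : ι → ℝ) (d : ℝ) : certaintyEquiv Q θ (u + const ι d) = certaintyEquiv Q θ u + const ι d := by
  ext i
  have hsplit : ∑ j, Q i j * exp (θ * (u j + d)) = (∑ j, Q i j * exp (θ * u j)) * exp (θ * d) := by
    rw [sum_mul]
    refine sum_congr rfl fun j _ => ?_
    rw [mul_add, exp_add]
    ring
  simp only [certaintyEquiv, Pi.add_apply, const_apply]
  rw [hsplit, log_mul (sum_mul_exp_pos hQ hQ1 _ i).ne' (exp_pos _).ne', log_exp]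
  field_simp

lemma certaintyEquiv_const (hQ1 : ∀ i, ∑ j, Q i j = 1) (hθ : θ ≠ 0) (d : ℝ) :
    certaintyEquiv Q θ (const ι d) = const ι d := by
  ext i
  simp only [certaintyEquiv, const_apply, ← sum_mul, hQ1 i, one_mul, log_exp]
  field_simp

lemma certaintyEquiv_le_of_le (hQ : ∀ i j, 0 ≤ Q i j) (hQ1 : ∀ i, ∑ j, Q i j = 1) (hθ : θ ≠ 0)
    {u : ι → ℝ} {L : ℝ} (hu : ∀ j, u j ≤ L) (i : ι) : certaintyEquiv Q θ u i ≤ L := by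
  simpa [certaintyEquiv_const hQ1 hθ] using certaintyEquiv_mono hQ hQ1 hθ (show u ≤ const ι L from hu) i

lemma lipschitzWith_certaintyEquiv (hQ : ∀ i j, 0 ≤ Q i j) (hQ1 : ∀ i, ∑ j, Q i j = 1) (hθ : θ ≠ 0) :
    LipschitzWith 1 (certaintyEquiv Q θ) := by
  have hle (u v : ι → ℝ) (i : ι) : certaintyEquiv Q θ u i ≤ certaintyEquiv Q θ v i + dist u v := by
    have huv : u ≤ v + const ι (dist u v) := fun j => by
      have := (le_abs_self _).trans ((Real.dist_eq _ _).symm.trans_le (dist_le_pi_dist u v j))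
      simp only [Pi.add_apply, const_apply]
      linarith
    have h := certaintyEquiv_mono hQ hQ1 hθ huv i
    rwa [certaintyEquiv_add_const hQ hQ1 hθ] at h
  refine LipschitzWith.of_dist_le_mul fun u v => ?_
  rw [NNReal.coe_one, one_mul, dist_pi_le_iff dist_nonneg]
  intro i
  rw [Real.dist_eq, abs_sub_le_iff]
  exact ⟨by linarith [hle u v i], by linarith [hle v u i, dist_comm u v]⟩

end CertaintyEquiv

section EpsteinZin

variable {ι : Type*} [Fintype ι] {Q : Matrix ι ι ℝ} {θ β L : ℝ} {a : ι → ℝ}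

/-- The Epstein–Zin map `v ↦ (a + β ((Q v ^ α) ^ (1 / α)) ^ ρ) ^ (1 / ρ)` in the coordinates
`u = ρ log v`, `θ = α / ρ`. -/
noncomputable def ezOperator (Q : Matrix ι ι ℝ) (θ : ℝ) (a : ι → ℝ) (β : ℝ) (u : ι → ℝ) (i : ι) :
    ℝ :=
  log (a i + β * exp (certaintyEquiv Q θ u i))

lemma ezOperator_le_of_le (hQ : ∀ i j, 0 ≤ Q i j) (hQ1 : ∀ i, ∑ j, Q i j = 1) (hθ : θ ≠ 0)
    (ha : ∀ i, 0 < a i) (hβ : 0 ≤ β) (haL : ∀ i, a i ≤ (1 - β) * exp L) {u : ι → ℝ}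
    (hu : ∀ j, u j ≤ L) (i : ι) : ezOperator Q θ a β u i ≤ L := by
  have hai := ha i
  rw [ezOperator, ← log_exp L]
  refine log_le_log (by positivity) ?_
  calc a i + β * exp (certaintyEquiv Q θ u i) ≤ a i + β * exp L := by
        gcongr; exact certaintyEquiv_le_of_le hQ hQ1 hθ hu i
    _ ≤ exp L := by linarith [haL i]

lemma le_of_isFixedPt_ezOperator (hQ : ∀ i j, 0 ≤ Q i j) (hQ1 : ∀ i, ∑ j, Q i j = 1) (hθ : θ ≠ 0)
    (ha : ∀ i, 0 < a i) (hβ0 : 0 ≤ β) (hβ1 : β < 1) (haL : ∀ i, a i ≤ (1 - β) * exp L)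
    {u : ι → ℝ} (hu : IsFixedPt (ezOperator Q θ a β) u) (j : ι) : u j ≤ L := by
  have : Nonempty ι := ⟨j⟩
  obtain ⟨k, hk⟩ := Finite.exists_max u
  have hak := ha k
  have hexp : exp (u k) = a k + β * exp (certaintyEquiv Q θ u k) := by
    conv_lhs => rw [← hu]
    exact exp_log (by positivity)
  have hN : exp (certaintyEquiv Q θ u k) ≤ exp (u k) :=
    exp_le_exp.2 (certaintyEquiv_le_of_le hQ hQ1 hθ hk k)
  have hk_le : exp (u k) ≤ exp L := by nlinarith [haL k]
  exact (hk j).trans (exp_le_exp.1 hk_le)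

lemma lipschitzOnWith_ezOperator (hQ : ∀ i j, 0 ≤ Q i j) (hQ1 : ∀ i, ∑ j, Q i j = 1) (hθ : θ ≠ 0)
    {m : ℝ} (hm : 0 < m) (ham : ∀ i, m ≤ a i) (hβ : 0 ≤ β) (L : ℝ) :
    LipschitzOnWith (β * exp L / (m + β * exp L)).toNNReal (ezOperator Q θ a β)
      (Iic (const ι L)) := by
  refine LipschitzOnWith.of_dist_le' fun u hu v hv => ?_
  refine (dist_pi_le_iff (by positivity)).2 fun i => ?_
  have hN := (dist_le_pi_dist _ _ i).trans
    ((lipschitzWith_certaintyEquiv hQ hQ1 hθ).dist_le_mul u v)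
  rw [NNReal.coe_one, one_mul, Real.dist_eq] at hN
  rw [Real.dist_eq]
  exact (abs_log_add_mul_exp_sub_le hm (ham i) hβ (certaintyEquiv_le_of_le hQ hQ1 hθ hu i)
    (certaintyEquiv_le_of_le hQ hQ1 hθ hv i)).trans (by gcongr)

theorem existsUnique_isFixedPt_ezOperator (hQ : ∀ i j, 0 ≤ Q i j) (hQ1 : ∀ i, ∑ j, Q i j = 1)
    (hθ : θ ≠ 0) (ha : ∀ i, 0 < a i) (hβ0 : 0 ≤ β) (hβ1 : β < 1) :
    ∃! u, IsFixedPt (ezOperator Q θ a β) u := by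
  obtain ⟨m, hm, ham⟩ := Finite.exists_pos_forall_le ha
  obtain ⟨B, hB⟩ := Finite.exists_le a
  set L := B / (1 - β)
  have haL : ∀ i, a i ≤ (1 - β) * exp L := fun i => by
    have := add_one_le_exp L
    calc a i ≤ (1 - β) * L := by rw [mul_div_cancel₀ _ (by linarith)]; exact hB i
      _ ≤ (1 - β) * exp L := by gcongr; linarith
  set K := Iic (const ι L)
  have hmaps : MapsTo (ezOperator Q θ a β) K K := fun u hu =>
    ezOperator_le_of_le hQ hQ1 hθ ha hβ0 haL hu
  have hcontr : ContractingWith (β * exp L / (m + β * exp L)).toNNReal (hmaps.restrict _ K K) :=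
    ⟨Real.toNNReal_lt_one.2 ((div_lt_one (by positivity)).2 (by linarith)),
      (lipschitzOnWith_ezOperator hQ hQ1 hθ hm ham hβ0 L).mapsToRestrict hmaps⟩
  obtain ⟨u, huK, hu, -⟩ := hcontr.exists_fixedPoint' isClosed_Iic.isComplete hmaps
    (x := const ι L) (mem_Iic.2 le_rfl) (edist_ne_top _ _)
  refine ⟨u, hu, fun w hw => ?_⟩
  have hwK : w ∈ K := le_of_isFixedPt_ezOperator hQ hQ1 hθ ha hβ0 hβ1 haL hw
  exact congrArg Subtype.val
    (hcontr.fixedPoint_unique' (x := ⟨w, hwK⟩) (y := ⟨u, huK⟩) (Subtype.ext hw) (Subtype.ext hu))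

lemma exp_certaintyEquiv_mul_log (hQ : ∀ i j, 0 ≤ Q i j) (hQ1 : ∀ i, ∑ j, Q i j = 1) {ρ α : ℝ}
    (hρ : ρ ≠ 0) (hα : α ≠ 0) {v : ι → ℝ} (hv : ∀ j, 0 < v j) (i : ι) :
    exp (certaintyEquiv Q (α / ρ) (fun j => ρ * log (v j)) i)
      = ((∑ j, Q i j * v j ^ α) ^ (1 / α)) ^ ρ := by
  have hpow (j : ι) : exp (α / ρ * (ρ * log (v j))) = v j ^ α := by
    rw [rpow_def_of_pos (hv j)]; congr 1; field_simp
  have hS := sum_mul_exp_pos hQ hQ1 (fun j => α / ρ * (ρ * log (v j))) i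
  simp only [certaintyEquiv, hpow] at hS ⊢
  rw [← rpow_mul hS.le, rpow_def_of_pos hS]
  congr 1
  field_simp

lemma isFixedPt_ezOperator_mul_log_iff (hQ : ∀ i j, 0 ≤ Q i j) (hQ1 : ∀ i, ∑ j, Q i j = 1)
    {ρ α : ℝ} (hρ : ρ ≠ 0) (hα : α ≠ 0) (ha : ∀ i, 0 < a i) (hβ : 0 ≤ β) {v : ι → ℝ}
    (hv : ∀ j, 0 < v j) :
    IsFixedPt (ezOperator Q (α / ρ) a β) (fun j => ρ * log (v j)) ↔
      ∀ i, v i = (a i + β * ((∑ j, Q i j * v j ^ α) ^ (1 / α)) ^ ρ) ^ (1 / ρ) := by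
  simp only [IsFixedPt, funext_iff, ezOperator]
  refine forall_congr' fun i => ?_
  rw [← exp_certaintyEquiv_mul_log hQ hQ1 hρ hα hv]
  have hai := ha i
  exact log_eq_mul_log_iff_eq_rpow (hv i) (by positivity) hρ

end EpsteinZin

theorem stmt_19_general {n : ℕ} (Q : Matrix (Fin n) (Fin n) ℝ)
    (hQ : ∀ i j, 0 ≤ Q i j) (hstoch : ∀ i, ∑ j, Q i j = 1)
    (β : ℝ) (hβ : β ∈ Set.Ioo (0 : ℝ) 1)
    (c : Fin n → ℝ) (hc : ∀ i, 0 < c i)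
    (ρ α : ℝ) (hρ : ρ ≠ 0) (hα : α ≠ 0) :
    ∃! v : Fin n → ℝ, (∀ i, 0 < v i) ∧
      ∀ i, v i = ((1 - β) * (c i) ^ ρ +
        β * ((∑ j, Q i j * (v j) ^ α) ^ (1 / α)) ^ ρ) ^ (1 / ρ) := by
  obtain ⟨hβ0, hβ1⟩ := hβ
  have ha : ∀ i, 0 < (1 - β) * c i ^ ρ := fun i => mul_pos (by linarith) (rpow_pos_of_pos (hc i) ρ)
  have hcoord {v : Fin n → ℝ} (hv : ∀ j, 0 < v j) :=
    isFixedPt_ezOperator_mul_log_iff hQ hstoch hρ hα ha hβ0.le hv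
  obtain ⟨u, hu, hu_uniq⟩ :=
    existsUnique_isFixedPt_ezOperator hQ hstoch (div_ne_zero hα hρ) ha hβ0.le hβ1
  have hu_log : (fun j => ρ * log (exp (u j / ρ))) = u := funext fun j => by
    rw [log_exp]; field_simp
  refine ⟨fun j => exp (u j / ρ), ⟨fun j => exp_pos _, (hcoord fun j => exp_pos _).1 ?_⟩, ?_⟩
  · rwa [hu_log]
  · rintro v ⟨hv, hveq⟩
    funext j
    rw [← hu_uniq _ ((hcoord hv).2 hveq), mul_div_cancel_left₀ _ hρ, exp_log (hv j)]

theorem stmt_19 {n : ℕ} (Q : Matrix (Fin n) (Fin n) ℝ)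
    (hQ : ∀ i j, 0 ≤ Q i j) (hstoch : ∀ i, ∑ j, Q i j = 1)
    (hirr : MatIrreducible Q)
    (β : ℝ) (hβ : β ∈ Set.Ioo (0 : ℝ) 1)
    (c : Fin n → ℝ) (hc : ∀ i, 0 < c i)
    (ρ α : ℝ) (hρ : ρ ≠ 0) (hα : α ≠ 0) :
    ∃! v : Fin n → ℝ, (∀ i, 0 < v i) ∧
      ∀ i, v i = ((1 - β) * (c i) ^ ρ +
        β * ((∑ j, Q i j * (v j) ^ α) ^ (1 / α)) ^ ρ) ^ (1 / ρ) :=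
  stmt_19_general Q hQ hstoch β hβ c hc ρ α hρ hα
end
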